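/- arXiv:1508.07134 — 7 statements merged into one kernel-verified Lean document; each statement's English description precedes it below -/
import Mathlib

section
/- Let X = (X_t)_{t∈[0,1]} be a real-valued stochastic process with almost surely continuous paths on a probability space (Ω, F, P) that satisfies the small ball estimate (S) with constants λ, μ, K₁, K₂ > 0, and suppose that for some θ > 0, almost surely the path t ↦ X_t is Hölder continuous of order θ on [0,1]. Then θ ≤ μ/λ. -/
/-!
A path that is `θ`-Hölder with constant `C` oscillates by at most `C Δ^θ` on `[0, Δ]`, so the
small ball estimate with `K₁ ε = C Δ^θ` bounds the probability of such paths by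
`exp (-K₂ (C / K₁)^(-λ) Δ^(μ - θλ))`. If `θλ > μ` this tends to `0` as `Δ → 0⁺`, so for each `C`
these paths form a null set; but a.s. every path is Hölder with some integer constant.
-/

open MeasureTheory Set

/-- A process `X = (X_t)_{t ∈ [0,1]}` satisfies the small ball estimate (S) with constants
`lam, mu, K₁, K₂ > 0` if for all `ε > 0`, `Δ ∈ (0,1]` and `s ∈ [0, 1-Δ]`,
`P(sup_{s ≤ t ≤ s+Δ} |X_t - X_s| ≤ K₁ ε) ≤ exp(-K₂ ε^{-λ} Δ^{μ})`. -/
def SmallBallEstimate {Ω : Type*} [MeasurableSpace Ω] (P : Measure Ω)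
    (X : ℝ → Ω → ℝ) (lam mu K₁ K₂ : ℝ) : Prop :=
  ∀ ε > (0 : ℝ), ∀ Δ ∈ Set.Ioc (0 : ℝ) 1, ∀ s ∈ Set.Icc (0 : ℝ) (1 - Δ),
    P {ω | ∀ t ∈ Set.Icc s (s + Δ), |X t ω - X s ω| ≤ K₁ * ε}
      ≤ ENNReal.ofReal (Real.exp (-K₂ * ε ^ (-lam) * Δ ^ mu))

open Filter Topology

namespace SmallBallEstimate

variable {Ω : Type*} {X : ℝ → Ω → ℝ} {θ C : ℝ}

def holderPaths (X : ℝ → Ω → ℝ) (θ C : ℝ) : Set Ω :=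
  {ω | ∀ s ∈ Icc (0 : ℝ) 1, ∀ t ∈ Icc (0 : ℝ) 1,
    |X t ω - X s ω| ≤ C * |t - s| ^ θ}

lemma holderPaths_mono {C' : ℝ} (h : C ≤ C') : holderPaths X θ C ⊆ holderPaths X θ C' :=
  fun _ hω s hs t ht =>
    (hω s hs t ht).trans (mul_le_mul_of_nonneg_right h (Real.rpow_nonneg (abs_nonneg _) _))

lemma holderPaths_subset_oscillation_le (hC : 0 ≤ C) (hθ : 0 ≤ θ) {Δ : ℝ} (hΔ : Δ ≤ 1) :
    holderPaths X θ C ⊆ {ω | ∀ t ∈ Icc 0 Δ, |X t ω - X 0 ω| ≤ C * Δ ^ θ} := by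
  intro ω hω t ht
  have hpow : |t - 0| ^ θ ≤ Δ ^ θ := by
    rw [sub_zero, abs_of_nonneg ht.1]
    exact Real.rpow_le_rpow ht.1 ht.2 hθ
  calc |X t ω - X 0 ω| ≤ C * |t - 0| ^ θ :=
        hω 0 ⟨le_rfl, zero_le_one⟩ t ⟨ht.1, ht.2.trans hΔ⟩
    _ ≤ C * Δ ^ θ := mul_le_mul_of_nonneg_left hpow hC

variable [MeasurableSpace Ω] {P : Measure Ω} {lam mu K₁ K₂ : ℝ}

lemma measure_holderPaths_le (hS : SmallBallEstimate P X lam mu K₁ K₂) (hK₁ : 0 < K₁)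
    (hC : 0 < C) (hθ : 0 ≤ θ) {Δ : ℝ} (hΔ : Δ ∈ Ioc 0 1) :
    P (holderPaths X θ C)
      ≤ ENNReal.ofReal (Real.exp (-(K₂ * (C / K₁) ^ (-lam) * Δ ^ (mu - θ * lam)))) := by
  set ε := C / K₁ * Δ ^ θ
  have hε : 0 < ε := by have := Real.rpow_pos_of_pos hΔ.1 θ; positivity
  have hball := hS ε hε Δ hΔ 0 ⟨le_rfl, by linarith [hΔ.2]⟩
  have hradius : K₁ * ε = C * Δ ^ θ := by simp only [ε]; field_simp
  have hexponent :
      -K₂ * ε ^ (-lam) * Δ ^ mu = -(K₂ * (C / K₁) ^ (-lam) * Δ ^ (mu - θ * lam)) := by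
    rw [Real.mul_rpow (by positivity) (Real.rpow_nonneg hΔ.1.le _), ← Real.rpow_mul hΔ.1.le,
      sub_eq_add_neg mu, Real.rpow_add hΔ.1]
    ring_nf
  rw [zero_add, hradius, hexponent] at hball
  exact (measure_mono (holderPaths_subset_oscillation_le hC.le hθ hΔ.2)).trans hball

lemma tendsto_exp_neg_mul_rpow_nhdsGT_zero {a β : ℝ} (ha : 0 < a) (hβ : β < 0) :
    Tendsto (fun Δ : ℝ => Real.exp (-(a * Δ ^ β))) (𝓝[>] 0) (𝓝 0) :=
  Real.tendsto_exp_neg_atTop_nhds_zero.comp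
    ((tendsto_rpow_neg_nhdsGT_zero hβ).const_mul_atTop ha)

lemma measure_holderPaths_eq_zero (hS : SmallBallEstimate P X lam mu K₁ K₂) (hK₁ : 0 < K₁)
    (hK₂ : 0 < K₂) (hC : 0 < C) (hθ : 0 ≤ θ) (hrough : mu < θ * lam) :
    P (holderPaths X θ C) = 0 := by
  have hlim := ENNReal.tendsto_ofReal (tendsto_exp_neg_mul_rpow_nhdsGT_zero
    (mul_pos hK₂ (Real.rpow_pos_of_pos (div_pos hC hK₁) (-lam))) (sub_neg.2 hrough))
  rw [ENNReal.ofReal_zero] at hlim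
  refine nonpos_iff_eq_zero.1 (ge_of_tendsto hlim ?_)
  filter_upwards [Ioc_mem_nhdsGT one_pos] with Δ hΔ
  exact measure_holderPaths_le hS hK₁ hC hθ hΔ

end SmallBallEstimate

open SmallBallEstimate in
theorem holder_exponent_le_of_smallBall_general {Ω : Type*} [MeasurableSpace Ω]
    (P : Measure Ω) [IsProbabilityMeasure P] (X : ℝ → Ω → ℝ)
    (lam mu K₁ K₂ θ : ℝ)
    (hlam : 0 < lam) (hK₁ : 0 < K₁) (hK₂ : 0 < K₂) (hθ : 0 < θ)
    (hS : SmallBallEstimate P X lam mu K₁ K₂)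
    (hHolder : ∀ᵐ ω ∂P, ∃ C : ℝ, ∀ s ∈ Set.Icc (0 : ℝ) 1, ∀ t ∈ Set.Icc (0 : ℝ) 1,
      |X t ω - X s ω| ≤ C * |t - s| ^ θ) :
    θ ≤ mu / lam := by
  rw [le_div_iff₀ hlam]
  by_contra! hrough
  have hnull : P (⋃ n : ℕ, holderPaths X θ (n + 1)) = 0 :=
    measure_iUnion_null fun n =>
      measure_holderPaths_eq_zero hS hK₁ hK₂ n.cast_add_one_pos hθ.le hrough
  have hcover : ∀ᵐ ω ∂P, ω ∈ ⋃ n : ℕ, holderPaths X θ (n + 1) := by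
    filter_upwards [hHolder] with ω ⟨C, hC⟩
    exact mem_iUnion.2 ⟨⌈C⌉₊, holderPaths_mono (by linarith [Nat.le_ceil C]) hC⟩
  obtain ⟨ω, hmem, hnotMem⟩ :=
    (hcover.and (measure_eq_zero_iff_ae_notMem.1 hnull)).exists
  exact hnotMem hmem

/-- If a process with a.s. continuous paths satisfies the small ball estimate (S) with
constants `λ, μ, K₁, K₂ > 0` and has a.s. Hölder continuous paths of order `θ > 0`
on `[0,1]`, then `θ ≤ μ/λ`. -/
theorem holder_exponent_le_of_smallBall {Ω : Type*} [MeasurableSpace Ω]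
    (P : Measure Ω) [IsProbabilityMeasure P] (X : ℝ → Ω → ℝ)
    (lam mu K₁ K₂ θ : ℝ)
    (hlam : 0 < lam) (hmu : 0 < mu) (hK₁ : 0 < K₁) (hK₂ : 0 < K₂) (hθ : 0 < θ)
    (hcont : ∀ᵐ ω ∂P, ContinuousOn (fun t => X t ω) (Set.Icc 0 1))
    (hS : SmallBallEstimate P X lam mu K₁ K₂)
    (hHolder : ∀ᵐ ω ∂P, ∃ C : ℝ, ∀ s ∈ Set.Icc (0 : ℝ) 1, ∀ t ∈ Set.Icc (0 : ℝ) 1,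
      |X t ω - X s ω| ≤ C * |t - s| ^ θ) :
    θ ≤ mu / lam :=
  holder_exponent_le_of_smallBall_general P X lam mu K₁ K₂ θ hlam hK₁ hK₂ hθ hS hHolder
end

section
/- Let X = (X_t)_{t∈[0,1]} be a real-valued stochastic process on a probability space (Ω, F, P) with E[X_t²] < ∞ for all t, satisfying (A1) with constants C₁ > 0, H₁ ∈ (0,1], (A2) with constants C₂ > 0, H₂ ∈ (0,1], and (B⁺). Then H₁ ≥ 1/2. -/
/-!
Cut `[0, 1]` into `n` intervals of length `1/n`. By (B⁺) the increments over these intervals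
are pairwise nonnegatively correlated, so the second moment of `X₁ - X₀`, which (A2) bounds by
`C₂`, dominates the sum of the second moments of the increments, which (A1) bounds below by
`n · C₁ n^{-2H₁}`. Hence `C₁ n^{1 - 2H₁} ≤ C₂` for every `n`, forcing `1 - 2H₁ ≤ 0`.
-/

open MeasureTheory Set Filter Finset

section SquareOfSum

variable {Ω ι : Type*} [MeasurableSpace Ω] {μ : Measure Ω} {s : Finset ι} {f : ι → Ω → ℝ}

theorem integral_sq_sum_eq_sum_sum (hf : ∀ i ∈ s, MemLp (f i) 2 μ) :
    ∫ ω, (∑ i ∈ s, f i ω) ^ 2 ∂μ = ∑ i ∈ s, ∑ j ∈ s, ∫ ω, f i ω * f j ω ∂μ := by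
  have hint : ∀ i ∈ s, ∀ j ∈ s, Integrable (fun ω => f i ω * f j ω) μ := fun i hi j hj =>
    memLp_one_iff_integrable.mp ((hf j hj).smul (p := 2) (q := 2) (r := 1) (hf i hi))
  simp_rw [sq, Finset.sum_mul_sum]
  rw [integral_finsetSum _ fun i hi => integrable_finsetSum _ (hint i hi)]
  exact Finset.sum_congr rfl fun i hi => integral_finsetSum _ (hint i hi)

theorem sum_integral_sq_le_integral_sq_sum (hf : ∀ i ∈ s, MemLp (f i) 2 μ)
    (hcorr : ∀ i ∈ s, ∀ j ∈ s, i ≠ j → 0 ≤ ∫ ω, f i ω * f j ω ∂μ) :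
    ∑ i ∈ s, ∫ ω, f i ω ^ 2 ∂μ ≤ ∫ ω, (∑ i ∈ s, f i ω) ^ 2 ∂μ := by
  rw [integral_sq_sum_eq_sum_sum hf]
  refine Finset.sum_le_sum fun i hi => ?_
  simp only [sq]
  refine Finset.single_le_sum (f := fun j => ∫ ω, f i ω * f j ω ∂μ) (fun j hj => ?_) hi
  by_cases hij : i = j
  · subst hij
    exact integral_nonneg fun ω => mul_self_nonneg _
  · exact hcorr i hi j hj hij

end SquareOfSum

theorem nonpos_of_forall_mul_natCast_rpow_le {c C a : ℝ} (hc : 0 < c)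
    (h : ∀ n : ℕ, 0 < n → c * (n : ℝ) ^ a ≤ C) : a ≤ 0 := by
  by_contra! ha
  have hgrowth : Tendsto (fun n : ℕ => c * (n : ℝ) ^ a) atTop atTop :=
    ((tendsto_rpow_atTop ha).comp tendsto_natCast_atTop_atTop).const_mul_atTop hc
  obtain ⟨n, hCn, hn⟩ := ((hgrowth.eventually_gt_atTop C).and (eventually_gt_atTop 0)).exists
  exact (h n hn).not_gt hCn

theorem sum_integral_sq_increment_le {Ω : Type*} [MeasurableSpace Ω] {P : Measure Ω}
    {X : ℝ → Ω → ℝ} (hL2 : ∀ t ∈ Icc (0 : ℝ) 1, MemLp (X t) 2 P)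
    (hB : ∀ s₁ t₁ s₂ t₂ : ℝ, 0 ≤ s₁ → s₁ ≤ t₁ → t₁ ≤ s₂ → s₂ ≤ t₂ → t₂ ≤ 1 →
      0 ≤ ∫ ω, (X t₁ ω - X s₁ ω) * (X t₂ ω - X s₂ ω) ∂P)
    {t : ℕ → ℝ} (ht : Monotone t) (ht₀ : 0 ≤ t 0) {n : ℕ} (htn : t n ≤ 1) :
    ∑ i ∈ range n, ∫ ω, (X (t (i + 1)) ω - X (t i) ω) ^ 2 ∂P
      ≤ ∫ ω, (X (t n) ω - X (t 0) ω) ^ 2 ∂P := by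
  have hmem : ∀ i ≤ n, t i ∈ Icc (0 : ℝ) 1 := fun i hi =>
    ⟨ht₀.trans (ht i.zero_le), (ht hi).trans htn⟩
  have hcorr : ∀ i j, i < j → j < n →
      0 ≤ ∫ ω, (X (t (i + 1)) ω - X (t i) ω) * (X (t (j + 1)) ω - X (t j) ω) ∂P :=
    fun i j hij hjn => hB _ _ _ _ (hmem i (by omega)).1 (ht i.le_succ) (ht hij)
      (ht j.le_succ) (hmem (j + 1) hjn).2
  have htelescope : ∀ ω, X (t n) ω - X (t 0) ω = ∑ i ∈ range n, (X (t (i + 1)) ω - X (t i) ω) :=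
    fun ω => (Finset.sum_range_sub (fun i => X (t i) ω) n).symm
  simp_rw [htelescope]
  refine sum_integral_sq_le_integral_sq_sum
    (fun i hi => (hL2 _ (hmem _ (mem_range.mp hi))).sub (hL2 _ (hmem _ (mem_range.mp hi).le)))
    fun i hi j hj hij => ?_
  rcases hij.lt_or_gt with hij | hji
  · exact hcorr i j hij (mem_range.mp hj)
  · simpa only [mul_comm] using hcorr j i hji (mem_range.mp hi)

theorem half_le_H1_of_A1_A2_Bplus_general {Ω : Type*} [MeasurableSpace Ω]
    (P : Measure Ω) (X : ℝ → Ω → ℝ)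
    (C₁ C₂ H₁ H₂ : ℝ)
    (hL2 : ∀ t ∈ Set.Icc (0 : ℝ) 1, MemLp (X t) 2 P)
    (hC₁ : 0 < C₁)
    (hA1 : ∀ s ∈ Set.Icc (0 : ℝ) 1, ∀ t ∈ Set.Icc (0 : ℝ) 1,
      C₁ * |t - s| ^ (2 * H₁) ≤ ∫ ω, (X t ω - X s ω) ^ 2 ∂P)
    (hA2 : ∀ s ∈ Set.Icc (0 : ℝ) 1, ∀ t ∈ Set.Icc (0 : ℝ) 1,
      ∫ ω, (X t ω - X s ω) ^ 2 ∂P ≤ C₂ * |t - s| ^ (2 * H₂))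
    (hB : ∀ s₁ t₁ s₂ t₂ : ℝ, 0 ≤ s₁ → s₁ ≤ t₁ → t₁ ≤ s₂ → s₂ ≤ t₂ → t₂ ≤ 1 →
      0 ≤ ∫ ω, (X t₁ ω - X s₁ ω) * (X t₂ ω - X s₂ ω) ∂P) :
    1 / 2 ≤ H₁ := by
  suffices key : ∀ n : ℕ, 0 < n → C₁ * (n : ℝ) ^ (1 - 2 * H₁) ≤ C₂ by
    linarith [nonpos_of_forall_mul_natCast_rpow_le hC₁ key]
  intro n hn
  have hn' : (0 : ℝ) < n := Nat.cast_pos.mpr hn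
  set t : ℕ → ℝ := fun i => i / n with ht_def
  have ht : Monotone t := fun i j hij => by simp only [ht_def]; gcongr
  have hmem : ∀ i ≤ n, t i ∈ Icc (0 : ℝ) 1 := fun i hi =>
    ⟨by positivity, (div_le_one hn').mpr (by exact_mod_cast hi)⟩
  have hgap : ∀ i, |t (i + 1) - t i| = (n : ℝ)⁻¹ := fun i => by
    rw [abs_of_nonneg (sub_nonneg.mpr (ht i.le_succ))]
    simp only [ht_def]; push_cast; ring
  have hstep : ∀ i ∈ range n,
      C₁ * (n : ℝ)⁻¹ ^ (2 * H₁) ≤ ∫ ω, (X (t (i + 1)) ω - X (t i) ω) ^ 2 ∂P := fun i hi => by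
    simpa only [hgap] using
      hA1 _ (hmem i (mem_range.mp hi).le) _ (hmem (i + 1) (mem_range.mp hi))
  calc C₁ * (n : ℝ) ^ (1 - 2 * H₁) = ∑ _i ∈ range n, C₁ * (n : ℝ)⁻¹ ^ (2 * H₁) := by
        rw [sum_const, card_range, nsmul_eq_mul, Real.rpow_sub hn', Real.rpow_one,
          Real.inv_rpow hn'.le]
        ring
    _ ≤ ∑ i ∈ range n, ∫ ω, (X (t (i + 1)) ω - X (t i) ω) ^ 2 ∂P := sum_le_sum hstep
    _ ≤ ∫ ω, (X (t n) ω - X (t 0) ω) ^ 2 ∂P :=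
        sum_integral_sq_increment_le hL2 hB ht (hmem 0 n.zero_le).1 (hmem n le_rfl).2
    _ ≤ C₂ := by
        simpa [ht_def, hn'.ne'] using hA2 0 (by norm_num) 1 (by norm_num)

/-- Remark 3.1: for a square-integrable process on `[0,1]`, conditions (A1), (A2) and (B⁺)
imply `H₁ ≥ 1/2`. -/
theorem half_le_H1_of_A1_A2_Bplus {Ω : Type*} [MeasurableSpace Ω]
    (P : Measure Ω) [IsProbabilityMeasure P] (X : ℝ → Ω → ℝ)
    (C₁ C₂ H₁ H₂ : ℝ)
    (hL2 : ∀ t ∈ Set.Icc (0 : ℝ) 1, MemLp (X t) 2 P)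
    (hC₁ : 0 < C₁) (hC₂ : 0 < C₂)
    (hH₁ : H₁ ∈ Set.Ioc (0 : ℝ) 1) (hH₂ : H₂ ∈ Set.Ioc (0 : ℝ) 1)
    (hA1 : ∀ s ∈ Set.Icc (0 : ℝ) 1, ∀ t ∈ Set.Icc (0 : ℝ) 1,
      C₁ * |t - s| ^ (2 * H₁) ≤ ∫ ω, (X t ω - X s ω) ^ 2 ∂P)
    (hA2 : ∀ s ∈ Set.Icc (0 : ℝ) 1, ∀ t ∈ Set.Icc (0 : ℝ) 1,
      ∫ ω, (X t ω - X s ω) ^ 2 ∂P ≤ C₂ * |t - s| ^ (2 * H₂))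
    (hB : ∀ s₁ t₁ s₂ t₂ : ℝ, 0 ≤ s₁ → s₁ ≤ t₁ → t₁ ≤ s₂ → s₂ ≤ t₂ → t₂ ≤ 1 →
      0 ≤ ∫ ω, (X t₁ ω - X s₁ ω) * (X t₂ ω - X s₂ ω) ∂P) :
    1 / 2 ≤ H₁ :=
  half_le_H1_of_A1_A2_Bplus_general P X C₁ C₂ H₁ H₂ hL2 hC₁ hA1 hA2 hB
end

section
/- Let X = (X_t)_{t∈[0,1]} be a real-valued stochastic process on a probability space (Ω, F, P) with E[X_t²] < ∞ for all t, satisfying (A1) with constants C₁ > 0, H₁ ∈ (0,1], (A2) with constants C₂ > 0, H₂ ∈ (0,1], and (B⁻). Then H₂ ≤ 1/2. -/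
/-!
By (B⁻), the increment variance `V s t = E[(X_t - X_s)²]` is subadditive when an interval is
halved. Halving `[0, 1]` `k` times and bounding each of the `2 ^ k` pieces by (A2) gives
`V 0 1 ≤ C₂ (2 ^ (1 - 2 H₂)) ^ k`, which tends to `0` if `H₂ > 1/2`; but (A1) gives `V 0 1 ≥ C₁ > 0`.
-/

open MeasureTheory Set

open Filter Topology

theorem integral_sq_add_le_of_integral_mul_nonpos {Ω : Type*} [MeasurableSpace Ω]
    {μ : Measure Ω} {f g : Ω → ℝ} (hf : MemLp f 2 μ) (hg : MemLp g 2 μ)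
    (hfg : ∫ ω, f ω * g ω ∂μ ≤ 0) :
    ∫ ω, (f ω + g ω) ^ 2 ∂μ ≤ ∫ ω, f ω ^ 2 ∂μ + ∫ ω, g ω ^ 2 ∂μ := by
  have hsq_int : Integrable (fun ω => f ω ^ 2 + g ω ^ 2) μ :=
    hf.integrable_sq.add hg.integrable_sq
  have hfg_int : Integrable (fun ω => 2 * (f ω * g ω)) μ :=
    (hf.integrable_mul hg).const_mul 2
  have hexpand : ∫ ω, (f ω + g ω) ^ 2 ∂μ =
      ∫ ω, f ω ^ 2 ∂μ + ∫ ω, g ω ^ 2 ∂μ + 2 * ∫ ω, f ω * g ω ∂μ := by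
    simp_rw [add_sq', mul_assoc]
    rw [integral_add hsq_int hfg_int,
      integral_add hf.integrable_sq hg.integrable_sq, integral_const_mul]
  linarith

section MidpointSubadditive

variable {V : ℝ → ℝ → ℝ} {a b C p : ℝ}

theorem le_mul_rpow_mul_pow_of_midpoint_subadditive
    (hsub : ∀ s t, a ≤ s → s ≤ t → t ≤ b → V s t ≤ V s ((s + t) / 2) + V ((s + t) / 2) t)
    (hbound : ∀ s t, a ≤ s → s ≤ t → t ≤ b → V s t ≤ C * (t - s) ^ p) (k : ℕ) :
    ∀ s t, a ≤ s → s ≤ t → t ≤ b → V s t ≤ C * (t - s) ^ p * (2 ^ (1 - p)) ^ k := by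
  induction k with
  | zero => simpa using hbound
  | succ k ih =>
    intro s t hs hst ht
    have hsm : s ≤ (s + t) / 2 := by linarith
    have hmt : (s + t) / 2 ≤ t := by linarith
    have hhalf : (s + t) / 2 - s = (t - s) / 2 ∧ t - (s + t) / 2 = (t - s) / 2 :=
      ⟨by ring, by ring⟩
    have hhalf_rpow : ((t - s) / 2) ^ p = (t - s) ^ p * 2 ^ (1 - p) / 2 := by
      rw [Real.div_rpow (by linarith) zero_le_two, Real.rpow_sub two_pos, Real.rpow_one]
      field_simp
    calc V s t ≤ V s ((s + t) / 2) + V ((s + t) / 2) t := hsub s t hs hst ht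
      _ ≤ C * ((t - s) / 2) ^ p * (2 ^ (1 - p)) ^ k +
          C * ((t - s) / 2) ^ p * (2 ^ (1 - p)) ^ k := by
        have hleft := ih s _ hs hsm (hmt.trans ht)
        have hright := ih _ t (hs.trans hsm) hmt ht
        rw [hhalf.1] at hleft
        rw [hhalf.2] at hright
        exact add_le_add hleft hright
      _ = C * (t - s) ^ p * (2 ^ (1 - p)) ^ (k + 1) := by
        rw [hhalf_rpow, pow_succ]; ring

theorem nonpos_of_midpoint_subadditive_of_le_rpow
    (hsub : ∀ s t, a ≤ s → s ≤ t → t ≤ b → V s t ≤ V s ((s + t) / 2) + V ((s + t) / 2) t)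
    (hbound : ∀ s t, a ≤ s → s ≤ t → t ≤ b → V s t ≤ C * (t - s) ^ p) (hp : 1 < p)
    {s t : ℝ} (hs : a ≤ s) (hst : s ≤ t) (ht : t ≤ b) : V s t ≤ 0 := by
  have hr : (2 : ℝ) ^ (1 - p) < 1 := Real.rpow_lt_one_of_one_lt_of_neg one_lt_two (by linarith)
  have hlim : Tendsto (fun k : ℕ => C * (t - s) ^ p * (2 ^ (1 - p)) ^ k) atTop (𝓝 0) := by
    simpa using (tendsto_pow_atTop_nhds_zero_of_lt_one (by positivity) hr).const_mul
      (C * (t - s) ^ p)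
  exact ge_of_tendsto' hlim fun k =>
    le_mul_rpow_mul_pow_of_midpoint_subadditive hsub hbound k s t hs hst ht

end MidpointSubadditive

theorem H2_le_half_of_A1_A2_Bminus_general {Ω : Type*} [MeasurableSpace Ω]
    (P : Measure Ω) (X : ℝ → Ω → ℝ)
    (C₁ C₂ H₁ H₂ : ℝ)
    (hL2 : ∀ t ∈ Set.Icc (0 : ℝ) 1, MemLp (X t) 2 P)
    (hC₁ : 0 < C₁)
    (hA1 : ∀ s ∈ Set.Icc (0 : ℝ) 1, ∀ t ∈ Set.Icc (0 : ℝ) 1,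
      C₁ * |t - s| ^ (2 * H₁) ≤ ∫ ω, (X t ω - X s ω) ^ 2 ∂P)
    (hA2 : ∀ s ∈ Set.Icc (0 : ℝ) 1, ∀ t ∈ Set.Icc (0 : ℝ) 1,
      ∫ ω, (X t ω - X s ω) ^ 2 ∂P ≤ C₂ * |t - s| ^ (2 * H₂))
    (hB : ∀ s₁ t₁ s₂ t₂ : ℝ, 0 ≤ s₁ → s₁ ≤ t₁ → t₁ ≤ s₂ → s₂ ≤ t₂ → t₂ ≤ 1 →
      ∫ ω, (X t₁ ω - X s₁ ω) * (X t₂ ω - X s₂ ω) ∂P ≤ 0) :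
    H₂ ≤ 1 / 2 := by
  by_contra! hH₂
  have hsub : ∀ s t, 0 ≤ s → s ≤ t → t ≤ 1 → ∫ ω, (X t ω - X s ω) ^ 2 ∂P ≤
      ∫ ω, (X ((s + t) / 2) ω - X s ω) ^ 2 ∂P + ∫ ω, (X t ω - X ((s + t) / 2) ω) ^ 2 ∂P := by
    intro s t hs hst ht
    have hsm : s ≤ (s + t) / 2 := by linarith
    have hmt : (s + t) / 2 ≤ t := by linarith
    have hL2s := hL2 s ⟨hs, by linarith⟩
    have hL2m := hL2 ((s + t) / 2) ⟨by linarith, by linarith⟩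
    have hL2t := hL2 t ⟨by linarith, ht⟩
    simpa only [Pi.sub_apply, sub_add_sub_cancel'] using integral_sq_add_le_of_integral_mul_nonpos
      (hL2m.sub hL2s) (hL2t.sub hL2m) (hB s _ _ t hs hsm le_rfl hmt ht)
  have hV01 := nonpos_of_midpoint_subadditive_of_le_rpow hsub (C := C₂) (p := 2 * H₂)
    (fun s t hs hst ht => by
      simpa only [abs_of_nonneg (sub_nonneg.2 hst)] using
        hA2 s ⟨hs, hst.trans ht⟩ t ⟨hs.trans hst, ht⟩)
    (by linarith) le_rfl zero_le_one le_rfl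
  have hA1₀₁ := hA1 0 ⟨le_rfl, zero_le_one⟩ 1 ⟨zero_le_one, le_rfl⟩
  simp only [sub_zero, abs_one, Real.one_rpow, mul_one] at hA1₀₁
  linarith

/-- Remark 3.1: for a square-integrable process on `[0,1]`, conditions (A1), (A2) and (B⁻)
imply `H₂ ≤ 1/2`. -/
theorem H2_le_half_of_A1_A2_Bminus {Ω : Type*} [MeasurableSpace Ω]
    (P : Measure Ω) [IsProbabilityMeasure P] (X : ℝ → Ω → ℝ)
    (C₁ C₂ H₁ H₂ : ℝ)
    (hL2 : ∀ t ∈ Set.Icc (0 : ℝ) 1, MemLp (X t) 2 P)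
    (hC₁ : 0 < C₁) (hC₂ : 0 < C₂)
    (hH₁ : H₁ ∈ Set.Ioc (0 : ℝ) 1) (hH₂ : H₂ ∈ Set.Ioc (0 : ℝ) 1)
    (hA1 : ∀ s ∈ Set.Icc (0 : ℝ) 1, ∀ t ∈ Set.Icc (0 : ℝ) 1,
      C₁ * |t - s| ^ (2 * H₁) ≤ ∫ ω, (X t ω - X s ω) ^ 2 ∂P)
    (hA2 : ∀ s ∈ Set.Icc (0 : ℝ) 1, ∀ t ∈ Set.Icc (0 : ℝ) 1,
      ∫ ω, (X t ω - X s ω) ^ 2 ∂P ≤ C₂ * |t - s| ^ (2 * H₂))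
    (hB : ∀ s₁ t₁ s₂ t₂ : ℝ, 0 ≤ s₁ → s₁ ≤ t₁ → t₁ ≤ s₂ → s₂ ≤ t₂ → t₂ ≤ 1 →
      ∫ ω, (X t₁ ω - X s₁ ω) * (X t₂ ω - X s₂ ω) ∂P ≤ 0) :
    H₂ ≤ 1 / 2 :=
  H2_le_half_of_A1_A2_Bminus_general P X C₁ C₂ H₁ H₂ hL2 hC₁ hA1 hA2 hB
end

section
/- Let X = (X_t)_{t∈[0,1]} be a real-valued stochastic process with E[X_t²] < ∞ for all t, satisfying (A2) with constants C₂ > 0, H₂ ∈ (0,1] and (B⁺). Let a ∈ (0, 1/4], n = ⌊1/a⌋, and set ξ_i = X_{ia} − X_{(i−1)a} for 2 ≤ i ≤ n. Then ∑_{i=2}^{n} ∑_{j=2}^{n} ( E[ξ_i ξ_j] )² ≤ C₂² a^{2H₂}. -/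
/-!
Write `ξᵢ` for the increments and `cᵢⱼ = E[ξᵢ ξⱼ]`. Each `cᵢⱼ` lies in `[0, C₂ a^{2H₂}]`:
nonnegativity is (B⁺) applied to disjoint increments, and the upper bound follows from
`2 cᵢⱼ ≤ E[ξᵢ²] + E[ξⱼ²]` and (A2). Hence `∑ cᵢⱼ² ≤ C₂ a^{2H₂} ∑ cᵢⱼ`, while
`∑ cᵢⱼ = E[(∑ ξᵢ)²] = E[(X_{na} - X_a)²] ≤ C₂` by telescoping and (A2).
-/

open MeasureTheory Set

lemma sum_sum_sq_le_mul_of_le {ι : Type*} (s : Finset ι) {c : ι → ι → ℝ} {M C : ℝ}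
    (hM : 0 ≤ M) (hc0 : ∀ i ∈ s, ∀ j ∈ s, 0 ≤ c i j) (hcM : ∀ i ∈ s, ∀ j ∈ s, c i j ≤ M)
    (hC : ∑ i ∈ s, ∑ j ∈ s, c i j ≤ C) :
    ∑ i ∈ s, ∑ j ∈ s, c i j ^ 2 ≤ M * C :=
  calc ∑ i ∈ s, ∑ j ∈ s, c i j ^ 2
      ≤ ∑ i ∈ s, ∑ j ∈ s, M * c i j :=
        Finset.sum_le_sum fun i hi => Finset.sum_le_sum fun j hj => by
          rw [sq]; exact mul_le_mul_of_nonneg_right (hcM i hi j hj) (hc0 i hi j hj)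
    _ = M * ∑ i ∈ s, ∑ j ∈ s, c i j := by simp_rw [Finset.mul_sum]
    _ ≤ M * C := mul_le_mul_of_nonneg_left hC hM

section Covariance

variable {Ω ι : Type*} [MeasurableSpace Ω] {P : Measure Ω}

lemma two_mul_integral_mul_le {f g : Ω → ℝ} (hf : MemLp f 2 P) (hg : MemLp g 2 P) :
    2 * ∫ ω, f ω * g ω ∂P ≤ ∫ ω, f ω ^ 2 ∂P + ∫ ω, g ω ^ 2 ∂P := by
  rw [← integral_const_mul, ← integral_add hf.integrable_sq hg.integrable_sq]
  refine integral_mono ((hf.integrable_mul hg).const_mul 2)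
    (hf.integrable_sq.add hg.integrable_sq) fun ω => ?_
  linarith [two_mul_le_add_sq (f ω) (g ω)]

lemma integral_mul_le_of_integral_sq_le {f g : Ω → ℝ} {M : ℝ} (hf : MemLp f 2 P)
    (hg : MemLp g 2 P) (hfM : ∫ ω, f ω ^ 2 ∂P ≤ M) (hgM : ∫ ω, g ω ^ 2 ∂P ≤ M) :
    ∫ ω, f ω * g ω ∂P ≤ M := by
  linarith [two_mul_integral_mul_le hf hg]

lemma sum_sum_integral_mul_eq_integral_sq_sum (s : Finset ι) {ξ : ι → Ω → ℝ}
    (hξ : ∀ i ∈ s, MemLp (ξ i) 2 P) :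
    ∑ i ∈ s, ∑ j ∈ s, ∫ ω, ξ i ω * ξ j ω ∂P = ∫ ω, (∑ i ∈ s, ξ i ω) ^ 2 ∂P := by
  have hint : ∀ i ∈ s, ∀ j ∈ s, Integrable (fun ω => ξ i ω * ξ j ω) P :=
    fun i hi j hj => (hξ i hi).integrable_mul (hξ j hj)
  simp_rw [sq, Finset.sum_mul_sum]
  rw [integral_finsetSum _ fun i hi => integrable_finsetSum _ (hint i hi)]
  exact Finset.sum_congr rfl fun i hi => (integral_finsetSum _ (hint i hi)).symm

theorem sum_sum_sq_integral_mul_le (s : Finset ι) {ξ : ι → Ω → ℝ} {M C : ℝ}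
    (hξ : ∀ i ∈ s, MemLp (ξ i) 2 P) (hM : 0 ≤ M)
    (hvar : ∀ i ∈ s, ∫ ω, ξ i ω ^ 2 ∂P ≤ M)
    (hcov : ∀ i ∈ s, ∀ j ∈ s, 0 ≤ ∫ ω, ξ i ω * ξ j ω ∂P)
    (hsum : ∫ ω, (∑ i ∈ s, ξ i ω) ^ 2 ∂P ≤ C) :
    ∑ i ∈ s, ∑ j ∈ s, (∫ ω, ξ i ω * ξ j ω ∂P) ^ 2 ≤ M * C :=
  sum_sum_sq_le_mul_of_le s hM hcov
    (fun i hi j hj =>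
      integral_mul_le_of_integral_sq_le (hξ i hi) (hξ j hj) (hvar i hi) (hvar j hj))
    (sum_sum_integral_mul_eq_integral_sq_sum s hξ ▸ hsum)

end Covariance

lemma mul_mem_Icc_of_le_natCast {a x : ℝ} {n : ℕ} (ha : 0 ≤ a) (hna : n * a ≤ 1)
    (hx : 0 ≤ x) (hxn : x ≤ n) : x * a ∈ Icc (0 : ℝ) 1 :=
  ⟨mul_nonneg hx ha, (mul_le_mul_of_nonneg_right hxn ha).trans hna⟩

lemma sub_one_mul_mem_Icc_and_mul_mem_Icc {a : ℝ} {n i : ℕ} (ha : 0 ≤ a) (hna : n * a ≤ 1)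
    (hi : 1 ≤ i) (hin : i ≤ n) :
    (i - 1 : ℝ) * a ∈ Icc (0 : ℝ) 1 ∧ (i : ℝ) * a ∈ Icc (0 : ℝ) 1 := by
  have hi' : (1 : ℝ) ≤ i := Nat.one_le_cast.mpr hi
  have hin' : (i : ℝ) ≤ n := Nat.cast_le.mpr hin
  exact ⟨mul_mem_Icc_of_le_natCast ha hna (by linarith) (by linarith),
    mul_mem_Icc_of_le_natCast ha hna (by linarith) hin'⟩

lemma sum_Icc_two_sub_pred {β : Type*} [AddCommGroup β] (F : ℝ → β) {n : ℕ} (hn : 2 ≤ n) :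
    ∑ i ∈ Finset.Icc 2 n, (F i - F (i - 1 : ℝ)) = F n - F 1 := by
  have h := Finset.sum_Icc_sub hn fun k : ℕ => F (k - 1 : ℝ)
  simp only [Nat.cast_add, Nat.cast_one, add_sub_cancel_right] at h
  rw [h]
  norm_num

lemma integral_increment_mul_nonneg {Ω : Type*} [MeasurableSpace Ω] {P : Measure Ω}
    {X : ℝ → Ω → ℝ}
    (hB : ∀ s₁ t₁ s₂ t₂ : ℝ, 0 ≤ s₁ → s₁ ≤ t₁ → t₁ ≤ s₂ → s₂ ≤ t₂ → t₂ ≤ 1 →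
      0 ≤ ∫ ω, (X t₁ ω - X s₁ ω) * (X t₂ ω - X s₂ ω) ∂P)
    {a : ℝ} {n i j : ℕ} (ha : 0 ≤ a) (hna : n * a ≤ 1) (hi : 1 ≤ i) (hj : 1 ≤ j)
    (hin : i ≤ n) (hjn : j ≤ n) :
    0 ≤ ∫ ω, (X (i * a) ω - X ((i - 1 : ℝ) * a) ω)
      * (X (j * a) ω - X ((j - 1 : ℝ) * a) ω) ∂P := by
  wlog hij : i ≤ j generalizing i j
  · simpa only [mul_comm] using this hj hi hjn hin (by omega)
  rcases hij.eq_or_lt with rfl | hij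
  · exact integral_nonneg fun ω => mul_self_nonneg _
  have hi' : (1 : ℝ) ≤ i := by exact_mod_cast hi
  have hij' : (i : ℝ) ≤ j - 1 := by
    rw [le_sub_iff_add_le]; exact_mod_cast hij
  exact hB _ _ _ _ (mul_nonneg (by linarith) ha) (by nlinarith) (by nlinarith) (by nlinarith)
    ((mul_le_mul_of_nonneg_right (by exact_mod_cast hjn) ha).trans hna)

theorem sum_sq_crossCov_le_of_Bplus_general {Ω : Type*} [MeasurableSpace Ω]
    (P : Measure Ω) (X : ℝ → Ω → ℝ)
    (C₂ H₂ a : ℝ)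
    (hL2 : ∀ t ∈ Set.Icc (0 : ℝ) 1, MemLp (X t) 2 P)
    (hC₂ : 0 < C₂) (hH₂ : H₂ ∈ Set.Ioc (0 : ℝ) 1)
    (hA2 : ∀ s ∈ Set.Icc (0 : ℝ) 1, ∀ t ∈ Set.Icc (0 : ℝ) 1,
      ∫ ω, (X t ω - X s ω) ^ 2 ∂P ≤ C₂ * |t - s| ^ (2 * H₂))
    (hB : ∀ s₁ t₁ s₂ t₂ : ℝ, 0 ≤ s₁ → s₁ ≤ t₁ → t₁ ≤ s₂ → s₂ ≤ t₂ → t₂ ≤ 1 →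
      0 ≤ ∫ ω, (X t₁ ω - X s₁ ω) * (X t₂ ω - X s₂ ω) ∂P)
    (ha : a ∈ Set.Ioc (0 : ℝ) (1 / 4)) :
    ∑ i ∈ Finset.Icc 2 ⌊1 / a⌋₊, ∑ j ∈ Finset.Icc 2 ⌊1 / a⌋₊,
      (∫ ω, (X (i * a) ω - X ((i - 1 : ℝ) * a) ω)
            * (X (j * a) ω - X ((j - 1 : ℝ) * a) ω) ∂P) ^ 2
      ≤ C₂ ^ 2 * a ^ (2 * H₂) := by
  obtain ⟨ha0, ha4⟩ := ha
  set n := ⌊1 / a⌋₊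
  have hn : 2 ≤ n := Nat.le_floor <| by rw [le_div_iff₀ ha0]; push_cast; linarith
  have hna : n * a ≤ 1 := (le_div_iff₀ ha0).mp (Nat.floor_le (by positivity))
  have hgrid {x : ℝ} (hx : 0 ≤ x) (hxn : x ≤ n) := mul_mem_Icc_of_le_natCast ha0.le hna hx hxn
  have hends {i : ℕ} (hi : i ∈ Finset.Icc 2 n) :=
    sub_one_mul_mem_Icc_and_mul_mem_Icc ha0.le hna (i := i)
      (by rw [Finset.mem_Icc] at hi; omega) (Finset.mem_Icc.mp hi).2
  have hvar : ∀ i ∈ Finset.Icc 2 n,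
      ∫ ω, (X (i * a) ω - X ((i - 1 : ℝ) * a) ω) ^ 2 ∂P ≤ C₂ * a ^ (2 * H₂) := fun i hi => by
    have h := hA2 _ (hends hi).1 _ (hends hi).2
    rwa [show (i : ℝ) * a - (i - 1) * a = a by ring, abs_of_pos ha0] at h
  have hsum : ∫ ω, (∑ i ∈ Finset.Icc 2 n, (X (i * a) ω - X ((i - 1 : ℝ) * a) ω)) ^ 2 ∂P
      ≤ C₂ := by
    have htelescope (ω : Ω) := sum_Icc_two_sub_pred (fun t => X (t * a) ω) hn
    have hdist : |n * a - 1 * a| ^ (2 * H₂) ≤ 1 :=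
      Real.rpow_le_one (abs_nonneg _) (by rw [abs_le]; constructor <;> nlinarith)
        (by linarith [hH₂.1])
    simp_rw [htelescope]
    exact (hA2 _ (hgrid zero_le_one (Nat.one_le_cast.mpr (by omega))) _
      (hgrid n.cast_nonneg le_rfl)).trans (mul_le_of_le_one_right hC₂.le hdist)
  refine (sum_sum_sq_integral_mul_le (Finset.Icc 2 n)
    (fun i hi => (hL2 _ (hends hi).2).sub (hL2 _ (hends hi).1)) (by positivity) hvar
    (fun i hi j hj => ?_) hsum).trans_eq (by ring)
  rw [Finset.mem_Icc] at hi hj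
  exact integral_increment_mul_nonneg hB ha0.le hna (by omega) (by omega) hi.2 hj.2

/-- Inequality (3.5): for a square-integrable process on `[0,1]` satisfying (A2) and (B⁺),
with `a ∈ (0,1/4]`, `n = ⌊1/a⌋` and `ξᵢ = X_{ia} - X_{(i-1)a}`, one has
`∑_{i,j=2}^{n} (E[ξᵢ ξⱼ])² ≤ C₂² a^{2H₂}`. -/
theorem sum_sq_crossCov_le_of_Bplus {Ω : Type*} [MeasurableSpace Ω]
    (P : Measure Ω) [IsProbabilityMeasure P] (X : ℝ → Ω → ℝ)
    (C₂ H₂ a : ℝ)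
    (hL2 : ∀ t ∈ Set.Icc (0 : ℝ) 1, MemLp (X t) 2 P)
    (hC₂ : 0 < C₂) (hH₂ : H₂ ∈ Set.Ioc (0 : ℝ) 1)
    (hA2 : ∀ s ∈ Set.Icc (0 : ℝ) 1, ∀ t ∈ Set.Icc (0 : ℝ) 1,
      ∫ ω, (X t ω - X s ω) ^ 2 ∂P ≤ C₂ * |t - s| ^ (2 * H₂))
    (hB : ∀ s₁ t₁ s₂ t₂ : ℝ, 0 ≤ s₁ → s₁ ≤ t₁ → t₁ ≤ s₂ → s₂ ≤ t₂ → t₂ ≤ 1 →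
      0 ≤ ∫ ω, (X t₁ ω - X s₁ ω) * (X t₂ ω - X s₂ ω) ∂P)
    (ha : a ∈ Set.Ioc (0 : ℝ) (1 / 4)) :
    ∑ i ∈ Finset.Icc 2 ⌊1 / a⌋₊, ∑ j ∈ Finset.Icc 2 ⌊1 / a⌋₊,
      (∫ ω, (X (i * a) ω - X ((i - 1 : ℝ) * a) ω)
            * (X (j * a) ω - X ((j - 1 : ℝ) * a) ω) ∂P) ^ 2
      ≤ C₂ ^ 2 * a ^ (2 * H₂) :=
  sum_sq_crossCov_le_of_Bplus_general P X C₂ H₂ a hL2 hC₂ hH₂ hA2 hB ha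
end

section
/- Let X = (X_t)_{t∈[0,1]} be a real-valued stochastic process with E[X_t²] < ∞ for all t, satisfying (A2) with constants C₂ > 0, H₂ ∈ (0,1] and (B⁻). Let a ∈ (0, 1/4], n = ⌊1/a⌋, and set ξ_i = X_{ia} − X_{(i−1)a} for 2 ≤ i ≤ n. Then ∑_{i=2}^{n} ∑_{j=2}^{n} ( E[ξ_i ξ_j] )² ≤ 2 C₂² a^{4H₂−1}. -/
open MeasureTheory Set
open scoped InnerProductSpace

/-!
The increments `ξᵢ` are vectors in `L²(P)` and `E[ξᵢ ξⱼ] = ⟪ξᵢ, ξⱼ⟫`. By (B⁻) their Gram matrix has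
nonpositive off-diagonal entries, while its total sum `‖∑ ξᵢ‖²` is nonnegative; hence the sum of
the absolute values of all entries is at most twice the trace. Each entry is bounded by
`M = C₂ a^{2H₂}` (Cauchy–Schwarz and (A2)), so the sum of squares is at most
`M · 2 · (trace) ≤ 2 M² / a`.
-/

section GramMatrix

variable {ι E : Type*} [Fintype ι] [NormedAddCommGroup E] [InnerProductSpace ℝ E] {v : ι → E}

theorem sum_sum_abs_inner_le_two_mul_sum_norm_sq (hoff : Pairwise fun i j => ⟪v i, v j⟫_ℝ ≤ 0) :
    ∑ i, ∑ j, |⟪v i, v j⟫_ℝ| ≤ 2 * ∑ i, ‖v i‖ ^ 2 := by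
  classical
  have hentry : ∀ i j, |⟪v i, v j⟫_ℝ| = (if i = j then 2 * ‖v i‖ ^ 2 else 0) - ⟪v i, v j⟫_ℝ := by
    intro i j
    by_cases hij : i = j
    · subst hij
      rw [if_pos rfl, real_inner_self_eq_norm_sq, abs_of_nonneg (by positivity)]
      ring
    · rw [if_neg hij, abs_of_nonpos (hoff hij), zero_sub]
  have hgram : ∑ i, ∑ j, ⟪v i, v j⟫_ℝ = ‖∑ i, v i‖ ^ 2 := by
    simp_rw [← real_inner_self_eq_norm_sq, sum_inner, inner_sum]
  calc ∑ i, ∑ j, |⟪v i, v j⟫_ℝ| = 2 * ∑ i, ‖v i‖ ^ 2 - ‖∑ i, v i‖ ^ 2 := by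
        simp_rw [hentry, Finset.sum_sub_distrib, Finset.sum_ite_eq, Finset.mem_univ, if_true,
          hgram, Finset.mul_sum]
    _ ≤ 2 * ∑ i, ‖v i‖ ^ 2 := sub_le_self _ (sq_nonneg _)

theorem sum_sum_inner_sq_le {M : ℝ} (hoff : Pairwise fun i j => ⟪v i, v j⟫_ℝ ≤ 0)
    (hM : 0 ≤ M) (hv : ∀ i, ‖v i‖ ^ 2 ≤ M) :
    ∑ i, ∑ j, ⟪v i, v j⟫_ℝ ^ 2 ≤ 2 * M * ∑ i, ‖v i‖ ^ 2 := by
  have hentry : ∀ i j, ⟪v i, v j⟫_ℝ ^ 2 ≤ M * |⟪v i, v j⟫_ℝ| := by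
    intro i j
    have hcs : |⟪v i, v j⟫_ℝ| ≤ M := by
      nlinarith [abs_real_inner_le_norm (v i) (v j), hv i, hv j, sq_nonneg (‖v i‖ - ‖v j‖)]
    calc ⟪v i, v j⟫_ℝ ^ 2 = |⟪v i, v j⟫_ℝ| * |⟪v i, v j⟫_ℝ| := by rw [← sq, sq_abs]
      _ ≤ M * |⟪v i, v j⟫_ℝ| := by gcongr
  calc ∑ i, ∑ j, ⟪v i, v j⟫_ℝ ^ 2 ≤ M * ∑ i, ∑ j, |⟪v i, v j⟫_ℝ| := by
        simp_rw [Finset.mul_sum]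
        exact Finset.sum_le_sum fun i _ => Finset.sum_le_sum fun j _ => hentry i j
    _ ≤ M * (2 * ∑ i, ‖v i‖ ^ 2) :=
        mul_le_mul_of_nonneg_left (sum_sum_abs_inner_le_two_mul_sum_norm_sq hoff) hM
    _ = 2 * M * ∑ i, ‖v i‖ ^ 2 := by ring

end GramMatrix

theorem MeasureTheory.MemLp.integral_mul_eq_inner_toLp {Ω : Type*} [MeasurableSpace Ω]
    {P : Measure Ω} {f g : Ω → ℝ} (hf : MemLp f 2 P) (hg : MemLp g 2 P) :
    ∫ ω, f ω * g ω ∂P = ⟪hf.toLp f, hg.toLp g⟫_ℝ := by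
  rw [L2.inner_def]
  refine integral_congr_ae ?_
  filter_upwards [hf.coeFn_toLp, hg.coeFn_toLp] with ω hfω hgω
  simp [hfω, hgω, mul_comm]

theorem sum_sum_sq_integral_mul_le_s12 {Ω ι : Type*} [MeasurableSpace Ω] {P : Measure Ω}
    [LinearOrder ι] {S : Finset ι} {f : ι → Ω → ℝ} {M : ℝ} (hf : ∀ i ∈ S, MemLp (f i) 2 P)
    (hoff : ∀ i ∈ S, ∀ j ∈ S, i < j → ∫ ω, f i ω * f j ω ∂P ≤ 0) (hM : 0 ≤ M)
    (hdiag : ∀ i ∈ S, ∫ ω, f i ω ^ 2 ∂P ≤ M) :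
    ∑ i ∈ S, ∑ j ∈ S, (∫ ω, f i ω * f j ω ∂P) ^ 2 ≤ 2 * M ^ 2 * S.card := by
  let v : S → Lp ℝ 2 P := fun i => (hf i i.2).toLp
  have hinner : ∀ i j : S, ⟪v i, v j⟫_ℝ = ∫ ω, f i ω * f j ω ∂P := fun i j =>
    ((hf i i.2).integral_mul_eq_inner_toLp (hf j j.2)).symm
  have hnorm : ∀ i, ‖v i‖ ^ 2 ≤ M := fun i => by
    rw [← real_inner_self_eq_norm_sq, hinner]
    simpa only [sq] using hdiag i i.2
  have hlt : ∀ i j : S, i < j → ⟪v i, v j⟫_ℝ ≤ 0 := fun i j hij =>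
    hinner i j ▸ hoff i i.2 j j.2 hij
  have hpair : Pairwise fun i j => ⟪v i, v j⟫_ℝ ≤ 0 := by
    intro i j hij
    rcases hij.lt_or_gt with h | h
    · exact hlt i j h
    · exact real_inner_comm (v i) (v j) ▸ hlt j i h
  calc ∑ i ∈ S, ∑ j ∈ S, (∫ ω, f i ω * f j ω ∂P) ^ 2
      = ∑ i : S, ∑ j : S, ⟪v i, v j⟫_ℝ ^ 2 := by
        rw [← Finset.sum_coe_sort S]
        refine Finset.sum_congr rfl fun i _ => ?_
        rw [← Finset.sum_coe_sort S]
        simp only [hinner]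
    _ ≤ 2 * M * ∑ i : S, ‖v i‖ ^ 2 := sum_sum_inner_sq_le hpair hM hnorm
    _ ≤ 2 * M * ∑ _i : S, M := by gcongr with i; exact hnorm i
    _ = 2 * M ^ 2 * S.card := by
        rw [Finset.sum_const, Finset.card_univ, Fintype.card_coe, nsmul_eq_mul]
        ring

theorem grid_endpoints_mem_Icc {a : ℝ} (ha : 0 < a) {i : ℕ} (hi : i ∈ Finset.Icc 1 ⌊1 / a⌋₊) :
    ((i : ℝ) - 1) * a ∈ Icc (0 : ℝ) 1 ∧ (i : ℝ) * a ∈ Icc (0 : ℝ) 1 := by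
  obtain ⟨hi1, hin⟩ := Finset.mem_Icc.1 hi
  have hi1' : (1 : ℝ) ≤ i := by exact_mod_cast hi1
  have hia : (i : ℝ) * a ≤ 1 := by
    rw [← le_div_iff₀ ha]
    exact (Nat.le_floor_iff (by positivity)).1 hin
  exact ⟨⟨by nlinarith, by nlinarith⟩, ⟨by nlinarith, hia⟩⟩

theorem sum_sq_crossCov_le_of_Bminus_general {Ω : Type*} [MeasurableSpace Ω]
    (P : Measure Ω) (X : ℝ → Ω → ℝ)
    (C₂ H₂ a : ℝ)
    (hL2 : ∀ t ∈ Set.Icc (0 : ℝ) 1, MemLp (X t) 2 P)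
    (hC₂ : 0 < C₂)
    (hA2 : ∀ s ∈ Set.Icc (0 : ℝ) 1, ∀ t ∈ Set.Icc (0 : ℝ) 1,
      ∫ ω, (X t ω - X s ω) ^ 2 ∂P ≤ C₂ * |t - s| ^ (2 * H₂))
    (hB : ∀ s₁ t₁ s₂ t₂ : ℝ, 0 ≤ s₁ → s₁ ≤ t₁ → t₁ ≤ s₂ → s₂ ≤ t₂ → t₂ ≤ 1 →
      ∫ ω, (X t₁ ω - X s₁ ω) * (X t₂ ω - X s₂ ω) ∂P ≤ 0)
    (ha : a ∈ Set.Ioc (0 : ℝ) (1 / 4)) :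
    ∑ i ∈ Finset.Icc 2 ⌊1 / a⌋₊, ∑ j ∈ Finset.Icc 2 ⌊1 / a⌋₊,
      (∫ ω, (X (i * a) ω - X ((i - 1 : ℝ) * a) ω)
            * (X (j * a) ω - X ((j - 1 : ℝ) * a) ω) ∂P) ^ 2
      ≤ 2 * C₂ ^ 2 * a ^ (4 * H₂ - 1) := by
  obtain ⟨ha0, -⟩ := ha
  set S := Finset.Icc 2 ⌊1 / a⌋₊
  have hgrid : ∀ i ∈ S, ((i : ℝ) - 1) * a ∈ Icc (0 : ℝ) 1 ∧ (i : ℝ) * a ∈ Icc (0 : ℝ) 1 :=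
    fun i hi => grid_endpoints_mem_Icc ha0 (Finset.Icc_subset_Icc_left one_le_two hi)
  have hbound := sum_sum_sq_integral_mul_le_s12 (P := P) (S := S)
    (f := fun i ω => X (i * a) ω - X ((i - 1 : ℝ) * a) ω) (M := C₂ * a ^ (2 * H₂))
    (fun i hi => (hL2 _ (hgrid i hi).2).sub (hL2 _ (hgrid i hi).1))
    (fun i hi j hj hij => by
      have hij' : (i : ℝ) + 1 ≤ j := by exact_mod_cast hij
      exact hB _ _ _ _ (hgrid i hi).1.1 (by nlinarith) (by nlinarith) (by nlinarith)
        (hgrid j hj).2.2)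
    (by positivity)
    (fun i hi => by
      simpa only [show (i : ℝ) * a - ((i : ℝ) - 1) * a = a by ring, abs_of_pos ha0] using
        hA2 _ (hgrid i hi).1 _ (hgrid i hi).2)
  have hcard : (S.card : ℝ) ≤ 1 / a := by
    have : S.card ≤ ⌊1 / a⌋₊ := by rw [Nat.card_Icc]; omega
    exact (Nat.cast_le.2 this).trans (Nat.floor_le (by positivity))
  calc _ ≤ 2 * (C₂ * a ^ (2 * H₂)) ^ 2 * S.card := hbound
    _ ≤ 2 * (C₂ * a ^ (2 * H₂)) ^ 2 * (1 / a) := by gcongr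
    _ = 2 * C₂ ^ 2 * a ^ (4 * H₂ - 1) := by
        rw [Real.rpow_sub ha0, Real.rpow_one, show 4 * H₂ = 2 * H₂ + 2 * H₂ by ring,
          Real.rpow_add ha0]
        ring

/-- Inequality (3.6): for a square-integrable process on `[0,1]` satisfying (A2) and (B⁻),
with `a ∈ (0,1/4]`, `n = ⌊1/a⌋` and `ξᵢ = X_{ia} - X_{(i-1)a}`, one has
`∑_{i,j=2}^{n} (E[ξᵢ ξⱼ])² ≤ 2 C₂² a^{4H₂ - 1}`. -/
theorem sum_sq_crossCov_le_of_Bminus {Ω : Type*} [MeasurableSpace Ω]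
    (P : Measure Ω) [IsProbabilityMeasure P] (X : ℝ → Ω → ℝ)
    (C₂ H₂ a : ℝ)
    (hL2 : ∀ t ∈ Set.Icc (0 : ℝ) 1, MemLp (X t) 2 P)
    (hC₂ : 0 < C₂) (hH₂ : H₂ ∈ Set.Ioc (0 : ℝ) 1)
    (hA2 : ∀ s ∈ Set.Icc (0 : ℝ) 1, ∀ t ∈ Set.Icc (0 : ℝ) 1,
      ∫ ω, (X t ω - X s ω) ^ 2 ∂P ≤ C₂ * |t - s| ^ (2 * H₂))
    (hB : ∀ s₁ t₁ s₂ t₂ : ℝ, 0 ≤ s₁ → s₁ ≤ t₁ → t₁ ≤ s₂ → s₂ ≤ t₂ → t₂ ≤ 1 →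
      ∫ ω, (X t₁ ω - X s₁ ω) * (X t₂ ω - X s₂ ω) ∂P ≤ 0)
    (ha : a ∈ Set.Ioc (0 : ℝ) (1 / 4)) :
    ∑ i ∈ Finset.Icc 2 ⌊1 / a⌋₊, ∑ j ∈ Finset.Icc 2 ⌊1 / a⌋₊,
      (∫ ω, (X (i * a) ω - X ((i - 1 : ℝ) * a) ω)
            * (X (j * a) ω - X ((j - 1 : ℝ) * a) ω) ∂P) ^ 2
      ≤ 2 * C₂ ^ 2 * a ^ (4 * H₂ - 1) :=
  sum_sq_crossCov_le_of_Bminus_general P X C₂ H₂ a hL2 hC₂ hA2 hB ha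
end

section
/- Let H ∈ (0,1) and K ∈ (0,1] with 2HK > 1. Then there exists t₀ ∈ (0,1) such that for all s, t ∈ [t₀, 1] with s ≠ t, 2H(K−1) t^{2H−1} s^{2H−1} (t^{2H} + s^{2H})^{K−1} + (2HK−1) |t−s|^{2HK−2} ≥ 0. -/
open Set

/-- For bifractional Brownian motion with `H ∈ (0,1)`, `K ∈ (0,1]`, `2HK > 1`, the mixed
second derivative of the covariance is eventually nonnegative: there is `t₀ ∈ (0,1)` such
that for all `s, t ∈ [t₀, 1]`, `s ≠ t`,
`2H(K-1) t^{2H-1} s^{2H-1} (t^{2H} + s^{2H})^{K-1} + (2HK-1)|t-s|^{2HK-2} ≥ 0`. -/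
theorem bifBm_mixed_deriv_nonneg (H K : ℝ)
    (hH : H ∈ Set.Ioo (0 : ℝ) 1) (hK : K ∈ Set.Ioc (0 : ℝ) 1)
    (hHK : 1 < 2 * H * K) :
    ∃ t₀ ∈ Set.Ioo (0 : ℝ) 1, ∀ s ∈ Set.Icc t₀ 1, ∀ t ∈ Set.Icc t₀ 1, s ≠ t →
      0 ≤ 2 * H * (K - 1) * t ^ (2 * H - 1) * s ^ (2 * H - 1)
            * (t ^ (2 * H) + s ^ (2 * H)) ^ (K - 1)
          + (2 * H * K - 1) * |t - s| ^ (2 * H * K - 2) := by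
  obtain ⟨hH0, hH1⟩ := hH
  obtain ⟨hK0, hK1⟩ := hK
  have h2H : 1 < 2 * H := by nlinarith
  have hHK2 : 2 * H * K < 2 := by nlinarith
  have hc0 : (0:ℝ) < 2 * H * K - 1 := by linarith
  have he0 : (0:ℝ) < 2 - 2 * H * K := by linarith
  -- choose a small δ
  obtain ⟨δ, hδ0, hδhalf, hδe⟩ :
      ∃ δ : ℝ, 0 < δ ∧ δ ≤ 1/2 ∧ δ ^ (2 - 2*H*K) ≤ (2*H*K - 1)/8 := by
    refine ⟨min (1/2) (((2*H*K - 1)/8) ^ (2 - 2*H*K)⁻¹), ?_, min_le_left _ _, ?_⟩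
    · exact lt_min (by norm_num) (Real.rpow_pos_of_pos (by positivity) _)
    · calc (min (1/2) (((2*H*K - 1)/8) ^ (2 - 2*H*K)⁻¹)) ^ (2 - 2*H*K)
          ≤ ((((2*H*K - 1)/8) ^ (2 - 2*H*K)⁻¹)) ^ (2 - 2*H*K) :=
            Real.rpow_le_rpow (le_min (by norm_num)
              (Real.rpow_pos_of_pos (by positivity) _).le) (min_le_right _ _) he0.le
        _ = (2*H*K - 1)/8 := Real.rpow_inv_rpow (by positivity) he0.ne'
  refine ⟨1 - δ/2, ⟨by linarith, by linarith⟩, ?_⟩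
  intro s hs t ht hst
  have ht₀34 : (3/4 : ℝ) ≤ 1 - δ/2 := by linarith
  have hs0 : 0 < s := lt_of_lt_of_le (by linarith) hs.1
  have ht0 : 0 < t := lt_of_lt_of_le (by linarith) ht.1
  -- bound the first factor product A ≤ 2
  have hts1 : t ^ (2*H - 1) ≤ 1 := Real.rpow_le_one ht0.le ht.2 (by linarith)
  have hss1 : s ^ (2*H - 1) ≤ 1 := Real.rpow_le_one hs0.le hs.2 (by linarith)
  have htpos : 0 < t ^ (2*H - 1) := Real.rpow_pos_of_pos ht0 _
  have hspos : 0 < s ^ (2*H - 1) := Real.rpow_pos_of_pos hs0 _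
  have hbase_ge : (1/2 : ℝ) ≤ t ^ (2*H) + s ^ (2*H) := by
    have h1 : t ^ (2:ℝ) ≤ t ^ (2*H) :=
      Real.rpow_le_rpow_of_exponent_ge ht0 ht.2 (by linarith)
    have h2 : (9/16 : ℝ) ≤ t ^ (2:ℝ) := by
      rw [show (2:ℝ) = ((2:ℕ):ℝ) by norm_num, Real.rpow_natCast]
      have h34 : (3/4 : ℝ) ≤ t := le_trans ht₀34 ht.1
      nlinarith
    have h3 : 0 < s ^ (2*H) := Real.rpow_pos_of_pos hs0 _
    linarith
  have hbpow : (t ^ (2*H) + s ^ (2*H)) ^ (K - 1) ≤ (1/2 : ℝ) ^ (K - 1) :=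
    Real.rpow_le_rpow_of_nonpos (by norm_num) hbase_ge (by linarith)
  have hhalfpow : ((1/2 : ℝ)) ^ (K - 1) ≤ 2 := by
    have h1 : ((1/2 : ℝ)) ^ (K - 1) ≤ ((1/2 : ℝ)) ^ (-1 : ℝ) :=
      Real.rpow_le_rpow_of_exponent_ge (by norm_num) (by norm_num) (by linarith)
    have h2 : ((1/2 : ℝ)) ^ (-1 : ℝ) = 2 := by
      rw [Real.rpow_neg_one]; norm_num
    linarith
  have hbpos : 0 < (t ^ (2*H) + s ^ (2*H)) ^ (K - 1) := Real.rpow_pos_of_pos (by linarith) _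
  have hA : t ^ (2*H - 1) * s ^ (2*H - 1) * (t ^ (2*H) + s ^ (2*H)) ^ (K - 1) ≤ 2 := by
    calc t ^ (2*H - 1) * s ^ (2*H - 1) * (t ^ (2*H) + s ^ (2*H)) ^ (K - 1)
        ≤ 1 * 1 * 2 := by
          apply mul_le_mul (mul_le_mul hts1 hss1 hspos.le (by norm_num))
            (hbpow.trans hhalfpow) hbpos.le (by norm_num)
      _ = 2 := by norm_num
  have hApos : 0 < t ^ (2*H - 1) * s ^ (2*H - 1) * (t ^ (2*H) + s ^ (2*H)) ^ (K - 1) := by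
    positivity
  -- first term ≥ -4
  have hterm1 : -4 ≤ 2 * H * (K - 1) * t ^ (2*H - 1) * s ^ (2*H - 1)
      * (t ^ (2*H) + s ^ (2*H)) ^ (K - 1) := by
    have hcoef : -2 ≤ 2 * H * (K - 1) := by nlinarith
    have hcoef' : 2 * H * (K - 1) ≤ 0 := by nlinarith
    nlinarith [hA, hApos]
  -- second term ≥ 8
  have hd0 : 0 < |t - s| := abs_pos.mpr (sub_ne_zero.mpr (Ne.symm hst))
  have hd1 : |t - s| ≤ δ/2 := by
    rw [abs_le]
    constructor
    · linarith [ht.1, hs.2]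
    · linarith [ht.2, hs.1]
  have hδ2pos : (0:ℝ) < δ/2 := by linarith
  have hmono : (δ/2) ^ (2*H*K - 2) ≤ |t - s| ^ (2*H*K - 2) :=
    Real.rpow_le_rpow_of_nonpos hd0 hd1 (by linarith)
  have hδ2e : (δ/2) ^ (2 - 2*H*K) ≤ (2*H*K - 1)/8 :=
    le_trans (Real.rpow_le_rpow hδ2pos.le (by linarith) he0.le) hδe
  have hkey : 8/(2*H*K - 1) ≤ (δ/2) ^ (2*H*K - 2) := by
    have hrw : (δ/2) ^ (2*H*K - 2) = ((δ/2) ^ (2 - 2*H*K))⁻¹ := by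
      rw [show (2*H*K - 2) = -(2 - 2*H*K) by ring, Real.rpow_neg hδ2pos.le]
    rw [hrw]
    have hpe : 0 < (δ/2) ^ (2 - 2*H*K) := Real.rpow_pos_of_pos hδ2pos _
    have h1 : ((2*H*K - 1)/8)⁻¹ ≤ ((δ/2) ^ (2 - 2*H*K))⁻¹ :=
      inv_anti₀ hpe hδ2e
    rwa [inv_div] at h1
  have hterm2 : 8 ≤ (2*H*K - 1) * |t - s| ^ (2*H*K - 2) := by
    have h1 : 8/(2*H*K - 1) ≤ |t - s| ^ (2*H*K - 2) := le_trans hkey hmono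
    have h2 : (2*H*K - 1) * (8/(2*H*K - 1)) ≤ (2*H*K - 1) * |t - s| ^ (2*H*K - 2) :=
      mul_le_mul_of_nonneg_left h1 hc0.le
    rwa [mul_div_cancel₀ _ hc0.ne'] at h2
  linarith
end

section
/- Let r ∈ [0, 1/2), H₂ ∈ (1/2, 1), D₂, D₃ > 0, δ ∈ (0,1), and let K : (0,1] × (0,1] → ℝ be measurable with |K(t₂, z) − K(t₁, z)| ≤ D₂ |t₂ − t₁|^{H₂} z^{−r} for all z, t₁, t₂ ∈ (0,1], and 0 ≤ K(t, z) ≤ D₃ (t−z)^{H₂ − 1/2} z^{−r} for all 0 < z < t ≤ 1. Then for all s, t with 1−δ ≤ s < t ≤ 1, ∫_0^s (K(t,z) − K(s,z))² dz + ∫_s^t K(t,z)² dz ≤ D₄ |t−s|^{2H₂}, where D₄ = D₂²/(1−2r) + D₃² (1−δ)^{−2r}. -/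
open MeasureTheory Set
open scoped ENNReal

/-!
Square the two kernel bounds and integrate. The Hölder bound leaves the integrable singularity
`z^{-2r}` with `∫_0^s z^{-2r} dz = s^{1-2r}/(1-2r) ≤ 1/(1-2r)`. Near the diagonal `z ≥ s ≥ 1-δ`,
so `z^{-2r} ≤ (1-δ)^{-2r}`, and `∫_s^t (t-z)^{2H₂-1} dz = (t-s)^{2H₂}/(2H₂) ≤ (t-s)^{2H₂}`.
-/

lemma setLIntegral_Ioc_zero_rpow_sub_one {p s : ℝ} (hp : 0 < p) (hs : 0 ≤ s) :
    ∫⁻ z in Ioc 0 s, ENNReal.ofReal (z ^ (p - 1)) = ENNReal.ofReal (s ^ p / p) := by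
  have hp' : -1 < p - 1 := by linarith
  have hint : IntegrableOn (fun z : ℝ => z ^ (p - 1)) (Ioc 0 s) :=
    (intervalIntegrable_iff_integrableOn_Ioc_of_le hs).mp
      (intervalIntegral.intervalIntegrable_rpow' hp')
  rw [← ofReal_integral_eq_lintegral_ofReal hint, ← intervalIntegral.integral_of_le hs,
    integral_rpow (Or.inl hp'), sub_add_cancel, Real.zero_rpow hp.ne', sub_zero]
  filter_upwards [ae_restrict_mem measurableSet_Ioc] with z hz
  exact Real.rpow_nonneg hz.1.le _

lemma setLIntegral_Ioc_sub_rpow_sub_one {p s t : ℝ} (hp : 0 < p) (hst : s ≤ t) :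
    ∫⁻ z in Ioc s t, ENNReal.ofReal ((t - z) ^ (p - 1)) = ENNReal.ofReal ((t - s) ^ p / p) := by
  have hp' : -1 < p - 1 := by linarith
  have hii : IntervalIntegrable (fun z : ℝ => (t - z) ^ (p - 1)) volume s t := by
    simpa using
      (intervalIntegral.intervalIntegrable_rpow' (a := t - s) (b := 0) hp').comp_sub_left t
  rw [← ofReal_integral_eq_lintegral_ofReal
      ((intervalIntegrable_iff_integrableOn_Ioc_of_le hst).mp hii),
    ← intervalIntegral.integral_of_le hst,
    intervalIntegral.integral_comp_sub_left (fun x : ℝ => x ^ (p - 1)) t, sub_self,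
    integral_rpow (Or.inl hp'), sub_add_cancel, Real.zero_rpow hp.ne', sub_zero]
  filter_upwards [ae_restrict_mem measurableSet_Ioc] with z hz
  exact Real.rpow_nonneg (sub_nonneg.mpr hz.2) _

lemma setLIntegral_Ioc_sq_le_of_abs_le_mul_rpow {f : ℝ → ℝ} {C r s : ℝ} (hr : r < 1 / 2)
    (hs₀ : 0 ≤ s) (hs₁ : s ≤ 1) (hf : ∀ z ∈ Ioc 0 s, |f z| ≤ C * z ^ (-r)) :
    ∫⁻ z in Ioc 0 s, ENNReal.ofReal (f z ^ 2) ≤ ENNReal.ofReal (C ^ 2 / (1 - 2 * r)) := by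
  have hp : 0 < 1 - 2 * r := by linarith
  calc ∫⁻ z in Ioc 0 s, ENNReal.ofReal (f z ^ 2)
      ≤ ∫⁻ z in Ioc 0 s, ENNReal.ofReal (C ^ 2) * ENNReal.ofReal (z ^ (1 - 2 * r - 1)) := by
        refine setLIntegral_mono' measurableSet_Ioc fun z hz => ?_
        rw [← ENNReal.ofReal_mul (sq_nonneg C)]
        refine ENNReal.ofReal_le_ofReal ?_
        calc f z ^ 2 ≤ (C * z ^ (-r)) ^ 2 := sq_le_sq.mpr ((hf z hz).trans (le_abs_self _))
          _ = C ^ 2 * z ^ (1 - 2 * r - 1) := by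
            rw [mul_pow, ← Real.rpow_mul_natCast hz.1.le]
            ring_nf
    _ = ENNReal.ofReal (C ^ 2 * (s ^ (1 - 2 * r) / (1 - 2 * r))) := by
        rw [lintegral_const_mul' _ _ ENNReal.ofReal_ne_top,
          setLIntegral_Ioc_zero_rpow_sub_one hp hs₀, ← ENNReal.ofReal_mul (sq_nonneg C)]
    _ ≤ ENNReal.ofReal (C ^ 2 / (1 - 2 * r)) := by
        refine ENNReal.ofReal_le_ofReal ?_
        rw [mul_div_assoc']
        gcongr
        calc C ^ 2 * s ^ (1 - 2 * r) ≤ C ^ 2 * 1 := by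
              gcongr
              exact Real.rpow_le_one hs₀ hs₁ hp.le
          _ = C ^ 2 := mul_one _

lemma setLIntegral_Ioc_sq_le_of_abs_le_mul_sub_rpow {f : ℝ → ℝ} {C H r s t : ℝ}
    (hH : 1 / 2 ≤ H) (hr : 0 ≤ r) (hs : 0 < s) (hst : s ≤ t)
    (hf : ∀ z ∈ Ioo s t, |f z| ≤ C * (t - z) ^ (H - 1 / 2) * z ^ (-r)) :
    ∫⁻ z in Ioc s t, ENNReal.ofReal (f z ^ 2)
      ≤ ENNReal.ofReal (C ^ 2 * s ^ (-(2 * r)) * (t - s) ^ (2 * H)) := by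
  have hp : 0 < 2 * H := by linarith
  have hC : 0 ≤ C ^ 2 * s ^ (-(2 * r)) := by positivity
  calc ∫⁻ z in Ioc s t, ENNReal.ofReal (f z ^ 2)
      = ∫⁻ z in Ioo s t, ENNReal.ofReal (f z ^ 2) := setLIntegral_congr Ioo_ae_eq_Ioc.symm
    _ ≤ ∫⁻ z in Ioo s t,
          ENNReal.ofReal (C ^ 2 * s ^ (-(2 * r))) * ENNReal.ofReal ((t - z) ^ (2 * H - 1)) := by
        refine setLIntegral_mono' measurableSet_Ioo fun z hz => ?_
        have hz₀ : 0 < z := hs.trans hz.1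
        rw [← ENNReal.ofReal_mul hC]
        refine ENNReal.ofReal_le_ofReal ?_
        calc f z ^ 2 ≤ (C * (t - z) ^ (H - 1 / 2) * z ^ (-r)) ^ 2 :=
              sq_le_sq.mpr ((hf z hz).trans (le_abs_self _))
          _ = C ^ 2 * z ^ (-(2 * r)) * (t - z) ^ (2 * H - 1) := by
              rw [mul_pow, mul_pow, ← Real.rpow_mul_natCast (sub_pos.mpr hz.2).le,
                ← Real.rpow_mul_natCast hz₀.le]
              ring_nf
          _ ≤ C ^ 2 * s ^ (-(2 * r)) * (t - z) ^ (2 * H - 1) := by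
              have hz₁ : z ^ (-(2 * r)) ≤ s ^ (-(2 * r)) :=
                Real.rpow_le_rpow_of_nonpos hs hz.1.le (by linarith)
              have htz : 0 ≤ (t - z) ^ (2 * H - 1) := Real.rpow_nonneg (sub_pos.mpr hz.2).le _
              gcongr
    _ = ENNReal.ofReal (C ^ 2 * s ^ (-(2 * r)) * ((t - s) ^ (2 * H) / (2 * H))) := by
        rw [lintegral_const_mul' _ _ ENNReal.ofReal_ne_top,
          setLIntegral_congr Ioo_ae_eq_Ioc, setLIntegral_Ioc_sub_rpow_sub_one hp hst,
          ← ENNReal.ofReal_mul hC]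
    _ ≤ ENNReal.ofReal (C ^ 2 * s ^ (-(2 * r)) * (t - s) ^ (2 * H)) := by
        refine ENNReal.ofReal_le_ofReal ?_
        gcongr
        exact div_le_self (Real.rpow_nonneg (sub_nonneg.mpr hst) _) (by linarith)

theorem volterra_kernel_A2_general (r H₂ D₂ D₃ δ : ℝ) (K : ℝ → ℝ → ℝ)
    (hr : r ∈ Set.Ico (0 : ℝ) (1 / 2)) (hH₂ : H₂ ∈ Set.Ioo (1 / 2 : ℝ) 1)
    (hδ : δ ∈ Set.Ioo (0 : ℝ) 1)
    (hB2 : ∀ z ∈ Set.Ioc (0 : ℝ) 1, ∀ t₁ ∈ Set.Ioc (0 : ℝ) 1, ∀ t₂ ∈ Set.Ioc (0 : ℝ) 1,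
      |K t₂ z - K t₁ z| ≤ D₂ * |t₂ - t₁| ^ H₂ * z ^ (-r))
    (hKbound : ∀ z t : ℝ, 0 < z → z < t → t ≤ 1 →
      0 ≤ K t z ∧ K t z ≤ D₃ * (t - z) ^ (H₂ - 1 / 2) * z ^ (-r))
    (s t : ℝ) (hs : 1 - δ ≤ s) (hst : s < t) (ht : t ≤ 1) :
    (∫⁻ z in Set.Ioc (0 : ℝ) s, ENNReal.ofReal ((K t z - K s z) ^ 2))
      + (∫⁻ z in Set.Ioc s t, ENNReal.ofReal ((K t z) ^ 2))
      ≤ ENNReal.ofReal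
          ((D₂ ^ 2 / (1 - 2 * r) + D₃ ^ 2 * (1 - δ) ^ (-(2 * r))) * |t - s| ^ (2 * H₂)) := by
  obtain ⟨hr₀, hr₁⟩ := hr
  have hδ₁ : 0 < 1 - δ := sub_pos.mpr hδ.2
  have hs₀ : 0 < s := hδ₁.trans_le hs
  have hts : 0 < t - s := sub_pos.mpr hst
  have hs₁ : s ≤ 1 := hst.le.trans ht
  have hHolder : ∫⁻ z in Ioc 0 s, ENNReal.ofReal ((K t z - K s z) ^ 2)
      ≤ ENNReal.ofReal (D₂ ^ 2 / (1 - 2 * r) * (t - s) ^ (2 * H₂)) := by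
    refine (setLIntegral_Ioc_sq_le_of_abs_le_mul_rpow (C := D₂ * |t - s| ^ H₂) hr₁ hs₀.le hs₁
      fun z hz => ?_).trans_eq ?_
    · exact hB2 z ⟨hz.1, hz.2.trans hs₁⟩ s ⟨hs₀, hs₁⟩ t ⟨hs₀.trans hst, ht⟩
    · rw [mul_pow, abs_of_pos hts, ← Real.rpow_mul_natCast hts.le]
      ring_nf
  have hDiag : ∫⁻ z in Ioc s t, ENNReal.ofReal (K t z ^ 2)
      ≤ ENNReal.ofReal (D₃ ^ 2 * (1 - δ) ^ (-(2 * r)) * (t - s) ^ (2 * H₂)) := by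
    refine (setLIntegral_Ioc_sq_le_of_abs_le_mul_sub_rpow (C := D₃) hH₂.1.le hr₀ hs₀ hst.le
      fun z hz => ?_).trans (ENNReal.ofReal_le_ofReal ?_)
    · obtain ⟨hK₀, hK⟩ := hKbound z t (hs₀.trans hz.1) hz.2 ht
      rwa [abs_of_nonneg hK₀]
    · have hweight : s ^ (-(2 * r)) ≤ (1 - δ) ^ (-(2 * r)) :=
        Real.rpow_le_rpow_of_nonpos hδ₁ hs (by linarith)
      have hts₁ : 0 ≤ (t - s) ^ (2 * H₂) := Real.rpow_nonneg hts.le _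
      gcongr
  have hHolder_nonneg : 0 ≤ D₂ ^ 2 / (1 - 2 * r) * (t - s) ^ (2 * H₂) :=
    mul_nonneg (div_nonneg (sq_nonneg _) (by linarith)) (Real.rpow_nonneg hts.le _)
  rw [abs_of_pos hts, add_mul, ENNReal.ofReal_add hHolder_nonneg (by positivity)]
  exact add_le_add hHolder hDiag

/-- Inequality (4.5): the upper incremental variance bound (A2) on `[1-δ, 1]` for a Volterra
kernel satisfying (B2): for `1-δ ≤ s < t ≤ 1`,
`∫_0^s (K(t,z)-K(s,z))² dz + ∫_s^t K(t,z)² dz ≤ D₄ |t-s|^{2H₂}` with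
`D₄ = D₂²/(1-2r) + D₃²(1-δ)^{-2r}`. -/
theorem volterra_kernel_A2 (r H₂ D₂ D₃ δ : ℝ) (K : ℝ → ℝ → ℝ)
    (hr : r ∈ Set.Ico (0 : ℝ) (1 / 2)) (hH₂ : H₂ ∈ Set.Ioo (1 / 2 : ℝ) 1)
    (hD₂ : 0 < D₂) (hD₃ : 0 < D₃) (hδ : δ ∈ Set.Ioo (0 : ℝ) 1)
    (hmeas : Measurable (Function.uncurry K))
    (hB2 : ∀ z ∈ Set.Ioc (0 : ℝ) 1, ∀ t₁ ∈ Set.Ioc (0 : ℝ) 1, ∀ t₂ ∈ Set.Ioc (0 : ℝ) 1,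
      |K t₂ z - K t₁ z| ≤ D₂ * |t₂ - t₁| ^ H₂ * z ^ (-r))
    (hKbound : ∀ z t : ℝ, 0 < z → z < t → t ≤ 1 →
      0 ≤ K t z ∧ K t z ≤ D₃ * (t - z) ^ (H₂ - 1 / 2) * z ^ (-r))
    (s t : ℝ) (hs : 1 - δ ≤ s) (hst : s < t) (ht : t ≤ 1) :
    (∫⁻ z in Set.Ioc (0 : ℝ) s, ENNReal.ofReal ((K t z - K s z) ^ 2))
      + (∫⁻ z in Set.Ioc s t, ENNReal.ofReal ((K t z) ^ 2))
      ≤ ENNReal.ofReal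
          ((D₂ ^ 2 / (1 - 2 * r) + D₃ ^ 2 * (1 - δ) ^ (-(2 * r))) * |t - s| ^ (2 * H₂)) :=
  volterra_kernel_A2_general r H₂ D₂ D₃ δ K hr hH₂ hδ hB2 hKbound s t hs hst ht
end
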